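/- arXiv:1701.03490 — 2 statements merged into one kernel-verified Lean document; each statement's English description precedes it below -/
import Mathlib

section
/- For k ≥ 2, the ordered configuration space Conf_2(Star_k) of two points in the star graph with k edges is path-connected if and only if k ≥ 3. -/
open Set

/-- The glueing relation for the star graph: points of `Fin k × [0,1]` are identified
iff they are equal or both lie at parameter `0` (the central vertex). -/
def starSetoid (k : ℕ) : Setoid (Fin k × Icc (0 : ℝ) 1) where
  r a b := a = b ∨ ((a.2 : ℝ) = 0 ∧ (b.2 : ℝ) = 0)
  iseqv := by
    constructor
    · exact fun a => Or.inl rfl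
    · rintro a b (rfl | ⟨h1, h2⟩)
      · exact Or.inl rfl
      · exact Or.inr ⟨h2, h1⟩
    · rintro a b c (rfl | ⟨h1, h2⟩) (rfl | ⟨h3, h4⟩)
      · exact Or.inl rfl
      · exact Or.inr ⟨h3, h4⟩
      · exact Or.inr ⟨h1, h2⟩
      · exact Or.inr ⟨h1, h4⟩

/-- The star graph with `k` edges: `k` unit intervals glued at `0`. -/
def StarGraph (k : ℕ) : Type := Quotient (starSetoid k)

instance (k : ℕ) : TopologicalSpace (StarGraph k) := instTopologicalSpaceQuotient

namespace StarAux

/-- Point on edge `i` at parameter `t`. -/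
def mk {k : ℕ} (i : Fin k) (t : Icc (0 : ℝ) 1) : StarGraph k :=
  Quotient.mk (starSetoid k) (i, t)

lemma mk_eq_iff {k : ℕ} {i j : Fin k} {t s : Icc (0 : ℝ) 1} :
    mk i t = mk j s ↔ ((i, t) = (j, s) ∨ ((t : ℝ) = 0 ∧ (s : ℝ) = 0)) := by
  exact Quotient.eq

lemma mk_zero_eq {k : ℕ} (i l : Fin k) {t : Icc (0 : ℝ) 1} (ht : (t : ℝ) = 0) :
    mk i t = mk l t := mk_eq_iff.2 (Or.inr ⟨ht, ht⟩)

lemma continuous_mk {k : ℕ} : Continuous (Quotient.mk (starSetoid k)) :=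
  continuous_quotient_mk'

noncomputable def zeroI : Icc (0 : ℝ) 1 := ⟨0, by norm_num⟩
noncomputable def oneI : Icc (0 : ℝ) 1 := ⟨1, by norm_num⟩

/-- The configuration space. -/
def Conf (k : ℕ) : Set (StarGraph k × StarGraph k) := {p | p.1 ≠ p.2}

/-- Convex interpolation inside `Icc 0 1`. -/
noncomputable def seg (a b : Icc (0 : ℝ) 1) (θ : unitInterval) : Icc (0 : ℝ) 1 :=
  ⟨(1 - (θ : ℝ)) * a + θ * b, by
    obtain ⟨θ, hθ0, hθ1⟩ := θ
    obtain ⟨a, ha0, ha1⟩ := a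
    obtain ⟨b, hb0, hb1⟩ := b
    constructor <;> simp only <;> nlinarith⟩

lemma seg_mem (a b : Icc (0 : ℝ) 1) (θ : unitInterval) :
    min (a : ℝ) b ≤ (seg a b θ : ℝ) ∧ (seg a b θ : ℝ) ≤ max (a : ℝ) b := by
  obtain ⟨θ, hθ0, hθ1⟩ := θ
  have h1 : min (a : ℝ) b ≤ a := min_le_left _ _
  have h2 : min (a : ℝ) b ≤ b := min_le_right _ _
  have h3 : (a : ℝ) ≤ max (a : ℝ) b := le_max_left _ _
  have h4 : (b : ℝ) ≤ max (a : ℝ) b := le_max_right _ _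
  constructor <;> simp only [seg] <;> nlinarith

lemma continuous_seg (a b : Icc (0 : ℝ) 1) : Continuous (seg a b) := by
  apply Continuous.subtype_mk
  fun_prop

lemma continuous_mk_seg {k : ℕ} (i : Fin k) (a b : Icc (0 : ℝ) 1) :
    Continuous fun θ => mk i (seg a b θ) :=
  continuous_mk.comp (continuous_const.prodMk (continuous_seg a b))

lemma seg_zero (a b : Icc (0 : ℝ) 1) : seg a b 0 = a := by
  ext; simp [seg]

lemma seg_one (a b : Icc (0 : ℝ) 1) : seg a b 1 = b := by
  ext; simp [seg]

/-- Move the first point along edge `i` from parameter `a` to `b`, keeping the second fixed. -/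
lemma joinedIn_moveFst {k : ℕ} {i j : Fin k} {a b s : Icc (0 : ℝ) 1}
    (h : ∀ u : Icc (0 : ℝ) 1, min (a : ℝ) b ≤ u → (u : ℝ) ≤ max (a : ℝ) b →
      mk i u ≠ mk j s) :
    JoinedIn (Conf k) (mk i a, mk j s) (mk i b, mk j s) := by
  refine ⟨⟨⟨fun θ => (mk i (seg a b θ), mk j s), ?_⟩, ?_, ?_⟩, ?_⟩
  · exact (continuous_mk_seg i a b).prodMk continuous_const
  · simp [seg_zero]
  · simp [seg_one]
  · intro θ
    exact h _ (seg_mem a b θ).1 (seg_mem a b θ).2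

/-- Swap symmetry. -/
lemma joinedIn_swap {k : ℕ} {x y x' y' : StarGraph k}
    (h : JoinedIn (Conf k) (x, y) (x', y')) :
    JoinedIn (Conf k) (y, x) (y', x') := by
  obtain ⟨γ, hγ⟩ := h
  exact ⟨γ.map continuous_swap, fun θ => Ne.symm (hγ θ)⟩

lemma joinedIn_moveSnd {k : ℕ} {i j : Fin k} {a b t : Icc (0 : ℝ) 1}
    (h : ∀ u : Icc (0 : ℝ) 1, min (a : ℝ) b ≤ u → (u : ℝ) ≤ max (a : ℝ) b →
      mk j u ≠ mk i t) :
    JoinedIn (Conf k) (mk i t, mk j a) (mk i t, mk j b) :=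
  joinedIn_swap (joinedIn_moveFst h)

/-- L1: push the first point out to the tip, when on a different edge. -/
lemma joinedIn_up {k : ℕ} {i j : Fin k} {a s : Icc (0 : ℝ) 1} (hij : i ≠ j)
    (hne : mk i a ≠ mk j s) :
    JoinedIn (Conf k) (mk i a, mk j s) (mk i oneI, mk j s) := by
  apply joinedIn_moveFst
  intro u hu1 _ heq
  rcases mk_eq_iff.1 heq with h | ⟨hu, hs⟩
  · exact hij (congrArg Prod.fst h)
  · -- u = 0 and s = 0; then a ≤ u = 0 so a = 0, contradicting hne
    have ha : (a : ℝ) = 0 := by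
      have h0 : min (a : ℝ) (oneI : ℝ) = a := min_eq_left a.2.2
      rw [h0, hu] at hu1
      exact le_antisymm hu1 a.2.1
    exact hne (mk_eq_iff.2 (Or.inr ⟨ha, hs⟩))

/-- L2: pull the first point to the centre, when the second is away from it. -/
lemma joinedIn_down {k : ℕ} {i j : Fin k} {a s : Icc (0 : ℝ) 1}
    (hs : 0 < (s : ℝ)) (hlt : i = j → (a : ℝ) < s) :
    JoinedIn (Conf k) (mk i a, mk j s) (mk i zeroI, mk j s) := by
  apply joinedIn_moveFst
  intro u _ hu2 heq
  rcases mk_eq_iff.1 heq with h | ⟨_, hs0⟩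
  · obtain ⟨h1, h2⟩ := Prod.mk.injEq .. ▸ h
    have := hlt h1
    have hmax : max (a : ℝ) (zeroI : ℝ) = a := max_eq_left a.2.1
    rw [hmax] at hu2
    have : (u : ℝ) = s := congrArg Subtype.val h2
    linarith
  · linarith

/-- Change the edge of the first point (both at the tip). -/
lemma joinedIn_changeFst {k : ℕ} {i j l : Fin k} (hij : i ≠ j) (hlj : l ≠ j) :
    JoinedIn (Conf k) (mk i oneI, mk j oneI) (mk l oneI, mk j oneI) := by
  have h1 : JoinedIn (Conf k) (mk i oneI, mk j oneI) (mk i zeroI, mk j oneI) :=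
    joinedIn_down (by norm_num [oneI]) (fun h => absurd h hij)
  have h2 : mk i zeroI = mk l zeroI := mk_zero_eq i l rfl
  have h3 : JoinedIn (Conf k) (mk l zeroI, mk j oneI) (mk l oneI, mk j oneI) := by
    apply joinedIn_up hlj
    intro heq
    rcases mk_eq_iff.1 heq with h | ⟨_, h0⟩
    · exact hlj (congrArg Prod.fst h)
    · norm_num [oneI] at h0
  refine h1.trans ?_
  rw [h2]
  exact h3

lemma joinedIn_changeSnd {k : ℕ} {i j l : Fin k} (hij : i ≠ j) (hli : l ≠ i) :
    JoinedIn (Conf k) (mk i oneI, mk j oneI) (mk i oneI, mk l oneI) :=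
  joinedIn_swap (joinedIn_changeFst hij.symm hli)

lemma mk_tip_ne {k : ℕ} {i j : Fin k} (hij : i ≠ j) : mk i oneI ≠ mk j oneI := by
  intro heq
  rcases mk_eq_iff.1 heq with h | ⟨h0, _⟩
  · exact hij (congrArg Prod.fst h)
  · norm_num [oneI] at h0

end StarAux

open StarAux in
/-- For `k ≥ 2`, the ordered configuration space of two points in the star graph with
`k` edges is path-connected if and only if `k ≥ 3`. -/
theorem conf2_star_pathConnected_iff (k : ℕ) (hk : 2 ≤ k) :
    IsPathConnected {p : StarGraph k × StarGraph k | p.1 ≠ p.2} ↔ 3 ≤ k := by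
  constructor
  · -- forward: if path connected then k ≥ 3
    intro hpc
    by_contra hlt
    push_neg at hlt
    interval_cases k
    -- k = 2 : build the continuous invariant
    · have wd : ∀ a b : Fin 2 × Icc (0:ℝ) 1, (starSetoid 2).r a b →
          (if a.1 = 0 then (a.2:ℝ) else -(a.2:ℝ)) = (if b.1 = 0 then (b.2:ℝ) else -(b.2:ℝ)) := by
        rintro a b (rfl | ⟨h1, h2⟩)
        · rfl
        · rw [h1, h2]; simp
      set f : Fin 2 × Icc (0:ℝ) 1 → ℝ :=
        fun a => if a.1 = 0 then (a.2:ℝ) else -(a.2:ℝ) with hf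
      have hfc : Continuous f := by
        have hfe : f = fun a => (if a.1 = 0 then (1:ℝ) else -1) * (a.2:ℝ) := by
          funext a; by_cases h : a.1 = 0 <;> simp [hf, h]
        rw [hfe]
        have hc1 : Continuous fun a : Fin 2 × Icc (0:ℝ) 1 =>
            (if a.1 = 0 then (1:ℝ) else -1) :=
          (continuous_of_discreteTopology
            (f := fun i : Fin 2 => if i = 0 then (1:ℝ) else -1)).comp continuous_fst
        exact hc1.mul (continuous_subtype_val.comp continuous_snd)
      set G : StarGraph 2 → ℝ := Quotient.lift f wd with hG
      have hGc : Continuous G := hfc.quotient_lift wd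
      have hGinj : Function.Injective G := by
        intro x y
        induction x using Quotient.ind
        induction y using Quotient.ind
        rename_i a b
        intro hxy
        simp only [hG, Quotient.lift_mk, hf] at hxy
        apply Quotient.sound
        obtain ⟨i, t⟩ := a; obtain ⟨j, s⟩ := b
        have ht0 := t.2.1
        have hs0 := s.2.1
        fin_cases i <;> fin_cases j <;> simp only [] at hxy <;> norm_num at hxy
        · exact Or.inl (congrArg _ (Subtype.ext hxy))
        · exact Or.inr ⟨by linarith, by linarith⟩
        · exact Or.inr ⟨by linarith, by linarith⟩
        · exact Or.inl (congrArg _ (Subtype.ext (by linarith)))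
      -- the two swapped configurations
      have hne : mk (0 : Fin 2) oneI ≠ mk 1 oneI := mk_tip_ne (by decide)
      have hmem1 : (mk (0:Fin 2) oneI, mk (1:Fin 2) oneI) ∈
          {p : StarGraph 2 × StarGraph 2 | p.1 ≠ p.2} := hne
      have hmem2 : (mk (1:Fin 2) oneI, mk (0:Fin 2) oneI) ∈
          {p : StarGraph 2 × StarGraph 2 | p.1 ≠ p.2} := hne.symm
      obtain ⟨γ, hγ⟩ := hpc.joinedIn _ hmem1 _ hmem2
      set h : unitInterval → ℝ := fun θ => G (γ θ).1 - G (γ θ).2 with hh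
      have hhc : Continuous h :=
        (hGc.comp (continuous_fst.comp γ.continuous)).sub
          (hGc.comp (continuous_snd.comp γ.continuous))
      have hG0 : G (mk (0:Fin 2) oneI) = 1 := by simp [hG, hf, StarAux.mk, oneI]
      have hG1 : G (mk (1:Fin 2) oneI) = -1 := by simp [hG, hf, StarAux.mk, oneI]
      have h0 : h 0 = 2 := by simp [hh, γ.source, hG0, hG1]; ring
      have h1 : h 1 = -2 := by simp [hh, γ.target, hG0, hG1]; ring
      have : (0:ℝ) ∈ Icc (h 1) (h 0) := by rw [h0, h1]; constructor <;> norm_num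
      obtain ⟨θ, hθ⟩ := intermediate_value_univ 1 0 hhc this
      have : G (γ θ).1 = G (γ θ).2 := by
        have : h θ = 0 := hθ
        simp only [hh] at this; linarith
      exact hγ θ (hGinj this)
  · -- backward : k ≥ 3 implies path connected
    intro hk3
    have h2 : 2 < k := hk3
    have h1 : 1 < k := by omega
    have h0 : 0 < k := by omega
    set e0 : Fin k := ⟨0, h0⟩
    set e1 : Fin k := ⟨1, h1⟩
    set e2 : Fin k := ⟨2, h2⟩
    have he01 : e0 ≠ e1 := by simp [e0, e1, Fin.ext_iff]
    have he02 : e0 ≠ e2 := by simp [e0, e2, Fin.ext_iff]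
    have he12 : e1 ≠ e2 := by simp [e1, e2, Fin.ext_iff]
    -- base point
    refine ⟨(mk e0 oneI, mk e1 oneI), mk_tip_ne he01, ?_⟩
    -- Step B: from any tip-tip configuration, reach the base
    have stepB : ∀ i j : Fin k, i ≠ j →
        JoinedIn (Conf k) (mk i oneI, mk j oneI) (mk e0 oneI, mk e1 oneI) := by
      intro i j hij
      -- first move j to j' ∉ {i, e0}
      set j' : Fin k := if i = e1 then e2 else e1 with hj'
      have hj'i : j' ≠ i := by
        by_cases h : i = e1 <;> simp [hj', h]
        · exact fun hc => he12 (h ▸ hc.symm)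
        · exact fun hc => h hc.symm
      have hj'e0 : j' ≠ e0 := by
        by_cases h : i = e1 <;> simp [hj', h, he02.symm, he01.symm]
      have m1 : JoinedIn (Conf k) (mk i oneI, mk j oneI) (mk i oneI, mk j' oneI) :=
        joinedIn_changeSnd hij hj'i
      have m2 : JoinedIn (Conf k) (mk i oneI, mk j' oneI) (mk e0 oneI, mk j' oneI) :=
        joinedIn_changeFst hj'i.symm hj'e0.symm
      have m3 : JoinedIn (Conf k) (mk e0 oneI, mk j' oneI) (mk e0 oneI, mk e1 oneI) :=
        joinedIn_changeSnd hj'e0.symm he01.symm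
      exact (m1.trans m2).trans m3
    -- Step A: any configuration reaches a tip-tip configuration
    rintro ⟨x, y⟩ hxy
    induction x using Quotient.ind
    induction y using Quotient.ind
    rename_i a b
    obtain ⟨i, t⟩ := a
    obtain ⟨j, s⟩ := b
    change mk i t ≠ mk j s at hxy
    have key : ∃ i' j' : Fin k, i' ≠ j' ∧
        JoinedIn (Conf k) (mk i t, mk j s) (mk i' oneI, mk j' oneI) := by
      by_cases hij : i = j
      · subst hij
        have hts : (t : ℝ) ≠ (s : ℝ) := by
          intro h
          exact hxy (mk_eq_iff.2 (Or.inl (by rw [Prod.mk.injEq]; exact ⟨rfl, Subtype.ext h⟩)))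
        -- pick a fresh edge l ≠ i
        obtain ⟨l, hl⟩ : ∃ l : Fin k, l ≠ i := by
          rcases eq_or_ne i e0 with h | h
          · exact ⟨e1, by rw [h]; exact he01.symm⟩
          · exact ⟨e0, Ne.symm h⟩
        rcases lt_or_gt_of_ne hts with hlt | hlt
        · -- t < s : pull the first point to the centre, then push up edge l
          have hs0 : 0 < (s : ℝ) := lt_of_le_of_lt t.2.1 hlt
          have m1 : JoinedIn (Conf k) (mk i t, mk i s) (mk i zeroI, mk i s) :=
            joinedIn_down hs0 (fun _ => hlt)
          have hz : mk i zeroI = mk l zeroI := mk_zero_eq i l rfl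
          have m2 : JoinedIn (Conf k) (mk l zeroI, mk i s) (mk l oneI, mk i s) := by
            apply joinedIn_up hl
            intro heq
            rcases mk_eq_iff.1 heq with h | ⟨_, h0⟩
            · exact hl (congrArg Prod.fst h)
            · linarith
          have m3 : JoinedIn (Conf k) (mk l oneI, mk i s) (mk l oneI, mk i oneI) := by
            apply joinedIn_moveSnd
            intro u _ _ heq
            rcases mk_eq_iff.1 heq with h | ⟨_, h0⟩
            · exact hl (congrArg Prod.fst h).symm
            · norm_num [oneI] at h0
          exact ⟨l, i, hl, (m1.trans (hz ▸ m2)).trans m3⟩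
        · -- s < t : symmetric
          have ht0 : 0 < (t : ℝ) := lt_of_le_of_lt s.2.1 hlt
          have m1 : JoinedIn (Conf k) (mk i t, mk i s) (mk i t, mk i zeroI) :=
            joinedIn_swap (joinedIn_down ht0 (fun _ => hlt))
          have hz : mk i zeroI = mk l zeroI := mk_zero_eq i l rfl
          have m2 : JoinedIn (Conf k) (mk i t, mk l zeroI) (mk i t, mk l oneI) := by
            apply joinedIn_moveSnd
            intro u _ _ heq
            rcases mk_eq_iff.1 heq with h | ⟨_, h0⟩
            · exact hl (congrArg Prod.fst h)
            · linarith
          have m3 : JoinedIn (Conf k) (mk i t, mk l oneI) (mk i oneI, mk l oneI) := by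
            apply joinedIn_moveFst
            intro u _ _ heq
            rcases mk_eq_iff.1 heq with h | ⟨_, h0⟩
            · exact hl (congrArg Prod.fst h).symm
            · norm_num [oneI] at h0
          exact ⟨i, l, fun h => hl h.symm, (m1.trans (hz ▸ m2)).trans m3⟩
      · -- i ≠ j : push both out to the tips
        have m1 : JoinedIn (Conf k) (mk i t, mk j s) (mk i oneI, mk j s) :=
          joinedIn_up hij hxy
        have m2 : JoinedIn (Conf k) (mk i oneI, mk j s) (mk i oneI, mk j oneI) := by
          apply joinedIn_moveSnd
          intro u _ _ heq
          rcases mk_eq_iff.1 heq with h | ⟨_, h0⟩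
          · exact hij (congrArg Prod.fst h).symm
          · norm_num [oneI] at h0
        exact ⟨i, j, hij, m1.trans m2⟩
    obtain ⟨i', j', hij', hjoin⟩ := key
    exact ((hjoin.trans (stepB i' j' hij')).symm : JoinedIn _ _ _)
end

section
/- The configuration space with sinks Conf^{\{0,1\}}_2([0,1]) of two points in the unit interval, where both points are allowed to coincide only at the endpoints 0 and 1, is path-connected, whereas Conf_2([0,1]) (no sinks) has exactly two path components. -/
open Set

/-- The unit interval `[0,1]`. -/
abbrev UI := Icc (0 : ℝ) 1

/-- The configuration space of two points in `[0,1]` with sinks `{0,1}`: the two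
particles may coincide only at the endpoints. -/
def confSink2 : Set (UI × UI) :=
  {p | p.1 ≠ p.2 ∨ (p.1 = p.2 ∧ ((p.1 : ℝ) = 0 ∨ (p.1 : ℝ) = 1))}

/-- The ordinary two-point configuration space of `[0,1]`. -/
def conf2 : Set (UI × UI) := {p | p.1 ≠ p.2}

open Topology

/-! In the coordinates of `ℝ²`, the component `{x < y}` is the trace of an open half-plane on the
unit square, hence convex. Adding the two sinks `(0,0)` and `(1,1)` keeps it star-shaped about
`(0,1)`, and `Conf^W_2` is the union of this set and its mirror image under the swap, which meet
at `(0,0)`. Without sinks, `x - y` would have to vanish along a path from `{x < y}` to `{y < x}`. -/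

theorem JoinedIn.exists_mem_apply_eq {X α : Type*} [TopologicalSpace X] [LinearOrder α]
    [TopologicalSpace α] [OrderClosedTopology α] {F : Set X} {x y : X} (h : JoinedIn F x y)
    {f : X → α} (hf : Continuous f) {c : α} (hx : f x ≤ c) (hy : c ≤ f y) :
    ∃ z ∈ F, f z = c := by
  obtain ⟨γ, hγ⟩ := h
  obtain ⟨t, ht⟩ := intermediate_value_univ 0 1 (hf.comp γ.continuous)
    (by simpa using And.intro hx hy : c ∈ Icc (f (γ 0)) (f (γ 1)))
  exact ⟨γ t, hγ t, ht⟩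

theorem isPathConnected_preimage_prodMap_val_iff {X Y : Type*} [TopologicalSpace X]
    [TopologicalSpace Y] {A : Set X} {B : Set Y} {t : Set (X × Y)} :
    IsPathConnected (Prod.map (↑) (↑) ⁻¹' t : Set (A × B)) ↔ IsPathConnected (t ∩ A ×ˢ B) := by
  rw [(IsInducing.subtypeVal.prodMap IsInducing.subtypeVal).isPathConnected_iff,
    image_preimage_eq_inter_range, range_prodMap, Subtype.range_coe, Subtype.range_coe]

theorem IsPathConnected.preimage_swap {X Y : Type*} [TopologicalSpace X] [TopologicalSpace Y]
    {s : Set (X × Y)} (hs : IsPathConnected s) : IsPathConnected (Prod.swap ⁻¹' s) :=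
  (Homeomorph.prodComm Y X).isPathConnected_preimage.2 hs

theorem convex_setOf_fst_lt_snd : Convex ℝ {q : ℝ × ℝ | q.1 < q.2} := by
  simpa [sub_pos] using
    convex_halfSpace_gt (LinearMap.snd ℝ ℝ ℝ - LinearMap.fst ℝ ℝ ℝ).isLinear 0

def ltWithSinks : Set (ℝ × ℝ) := {q | q.1 < q.2} ∪ {(0, 0), (1, 1)}

theorem starConvex_ltWithSinks : StarConvex ℝ (0, 1) ltWithSinks := by
  have h01 : ((0 : ℝ), (1 : ℝ)) ∈ ltWithSinks := Or.inl (by norm_num)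
  refine (starConvex_iff_forall_pos h01).2 fun y hy a b ha hb hab => Or.inl ?_
  simp only [mem_ofPred_eq, Prod.fst_add, Prod.snd_add, Prod.smul_fst, Prod.smul_snd, smul_eq_mul]
  rcases hy with hy | rfl | rfl
  · nlinarith [mul_lt_mul_of_pos_left (show y.1 < y.2 from hy) hb]
  · simpa using ha
  · simp only; linarith

theorem isPathConnected_setOf_lt : IsPathConnected {p : UI × UI | (p.1 : ℝ) < p.2} := by
  refine isPathConnected_preimage_prodMap_val_iff (t := {q | q.1 < q.2}).2 ?_
  exact (convex_setOf_fst_lt_snd.inter ((convex_Icc _ _).prod (convex_Icc _ _))).isPathConnected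
    ⟨(0, 1), zero_lt_one' ℝ, by simp⟩

theorem isPathConnected_preimage_ltWithSinks :
    IsPathConnected (Prod.map (↑) (↑) ⁻¹' ltWithSinks : Set (UI × UI)) := by
  refine isPathConnected_preimage_prodMap_val_iff.2 ?_
  have hsq : (0, 1) ∈ Icc (0 : ℝ) 1 ×ˢ Icc (0 : ℝ) 1 := by simp
  have hstar :=
    starConvex_ltWithSinks.inter (((convex_Icc _ _).prod (convex_Icc _ _)).starConvex hsq)
  exact hstar.isPathConnected ⟨Or.inl (zero_lt_one' ℝ), hsq⟩

theorem confSink2_eq_union_swap :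
    confSink2 = (Prod.map (↑) (↑) ⁻¹' ltWithSinks ∪
      Prod.swap ⁻¹' (Prod.map (↑) (↑) ⁻¹' ltWithSinks) : Set (UI × UI)) := by
  ext ⟨a, b⟩
  simp only [confSink2, ltWithSinks, mem_ofPred_eq, mem_union, mem_preimage, Prod.map_apply,
    Prod.swap_prod_mk, mem_insert_iff, mem_singleton_iff, Prod.mk.injEq, ne_eq, Subtype.ext_iff]
  grind

theorem isPathConnected_confSink2 : IsPathConnected confSink2 := by
  rw [confSink2_eq_union_swap]
  have h := isPathConnected_preimage_ltWithSinks
  exact h.union h.preimage_swap ⟨(0, 0), by simp [ltWithSinks], by simp [ltWithSinks]⟩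

/-- The configuration space of two points in `[0,1]` with both endpoints as sinks is
path-connected, whereas without sinks `Conf_2([0,1])` has exactly two path components:
`{x < y}` and `{y < x}`, each path-connected, disjoint, covering the space, and with no
path inside `Conf_2([0,1])` joining one to the other. -/
theorem confSink_interval_two_points :
    IsPathConnected confSink2 ∧
    (let C₁ : Set (UI × UI) := {p | (p.1 : ℝ) < (p.2 : ℝ)}
     let C₂ : Set (UI × UI) := {p | (p.2 : ℝ) < (p.1 : ℝ)}
     C₁ ∪ C₂ = conf2 ∧ Disjoint C₁ C₂ ∧
     IsPathConnected C₁ ∧ IsPathConnected C₂ ∧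
     ∀ x ∈ C₁, ∀ y ∈ C₂, ¬ JoinedIn conf2 x y) := by
  refine ⟨isPathConnected_confSink2, ?_, ?_, isPathConnected_setOf_lt,
    isPathConnected_setOf_lt.preimage_swap, ?_⟩
  · ext p
    simp [conf2, Subtype.ext_iff]
  · exact disjoint_left.2 fun _ h₁ h₂ => lt_asymm (α := ℝ) h₁ h₂
  · intro x hx y hy hxy
    obtain ⟨z, hz, hz0⟩ := hxy.exists_mem_apply_eq (f := fun p : UI × UI => (p.1 : ℝ) - p.2)
      (by fun_prop) (sub_nonpos.2 hx.le) (sub_nonneg.2 hy.le)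
    exact hz (Subtype.ext (sub_eq_zero.1 hz0))
end
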